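/- arXiv:2209.15318 — 2 statements merged into one kernel-verified Lean document; each statement's English description precedes it below -/
import Mathlib

section
/- For positive definite n×n real symmetric matrices A and B and any t ∈ [0,1]: log det(tA + (1-t)B) ≥ t·log det(A) + (1-t)·log det(B) + [t(1-t)/(2·max{λmax(A)², λmax(B)²})]·‖A-B‖_F², where λmax denotes the largest eigenvalue and ‖·‖_F the Frobenius norm. -/
/-!
Write `K = max (λmax A) (λmax B)` and `f s = log det (s • A + (1 - s) • B)`. If `X, Y` are positive
definite with midpoint `Z ≤ K`, then with `W = √Z` we have `X = W P W`, `Y = W Q W` and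
`P + Q = 2`, so by `log x ≤ x - 1` applied to the eigenvalues of `√P Q √P`,
`log det P + log det Q ≤ tr (P Q) - n = -tr ((P - Q)²) / 4`, whereas
`tr ((X - Y)²) = tr ((P - Q) Z (P - Q) Z) ≤ K² tr ((P - Q)²)`. Thus `f` is strongly midpoint
concave, and `f s + c s² / (2 K²)` with `c = ‖A - B‖_F²`, being continuous, is concave on `[0, 1]`.
-/

open Matrix Set
open scoped MatrixOrder

/-- Reflecting a minimum point of `g` across the nearer endpoint bounds `g` there by the minimum. -/
theorem nonneg_of_midpoint_concave {g : ℝ → ℝ} {a b : ℝ} (hg : ContinuousOn g (Icc a b))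
    (hmid : ∀ x ∈ Icc a b, ∀ y ∈ Icc a b, (g x + g y) / 2 ≤ g ((x + y) / 2))
    (ha : 0 ≤ g a) (hb : 0 ≤ g b) {t : ℝ} (ht : t ∈ Icc a b) : 0 ≤ g t := by
  have hab : a ≤ b := ht.1.trans ht.2
  obtain ⟨s, hs, hmin⟩ := isCompact_Icc.exists_isMinOn ⟨t, ht⟩ hg
  rw [isMinOn_iff] at hmin
  refine le_trans ?_ (hmin t ht)
  rcases le_total s ((a + b) / 2) with h | h
  · have hs' : 2 * s - a ∈ Icc a b := ⟨by linarith [hs.1], by linarith⟩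
    have := hmid a (left_mem_Icc.2 hab) _ hs'
    rw [show (a + (2 * s - a)) / 2 = s by ring] at this
    linarith [hmin _ hs']
  · have hs' : 2 * s - b ∈ Icc a b := ⟨by linarith, by linarith [hs.2]⟩
    have := hmid b (right_mem_Icc.2 hab) _ hs'
    rw [show (b + (2 * s - b)) / 2 = s by ring] at this
    linarith [hmin _ hs']

namespace Matrix

variable {ι : Type*}

theorem PosDef.smul_add_one_sub_smul {A B : Matrix ι ι ℝ} (hA : A.PosDef) (hB : B.PosDef) {t : ℝ}
    (ht : t ∈ Icc (0 : ℝ) 1) : (t • A + (1 - t) • B).PosDef := by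
  rcases ht.2.lt_or_eq with ht1 | rfl
  · exact (hB.smul (sub_pos.2 ht1)).posSemidef_add (hA.posSemidef.smul ht.1)
  · simpa using hA

variable [Fintype ι] [DecidableEq ι]

theorem IsHermitian.le_smul_one_of_eigenvalues_le {A : Matrix ι ι ℝ} (hA : A.IsHermitian) {K : ℝ}
    (h : ∀ i, hA.eigenvalues i ≤ K) : A ≤ K • 1 := by
  rw [← Algebra.algebraMap_eq_smul_one, le_algebraMap_iff_spectrum_le,
    hA.spectrum_real_eq_range_eigenvalues]
  rintro _ ⟨i, rfl⟩
  exact h i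

theorem PosDef.log_det_le_trace_sub_card {M : Matrix ι ι ℝ} (hM : M.PosDef) :
    Real.log M.det ≤ M.trace - Fintype.card ι := by
  have h := hM.1.det_eq_prod_eigenvalues
  have h2 := hM.1.trace_eq_sum_eigenvalues
  simp only [RCLike.ofReal_real_eq_id, id] at h h2
  rw [h, h2, Real.log_prod fun i _ => (hM.eigenvalues_pos i).ne', ← Finset.card_univ,
    Finset.cast_card, ← Finset.sum_sub_distrib]
  exact Finset.sum_le_sum fun i _ => Real.log_le_sub_one_of_pos (hM.eigenvalues_pos i)

theorem PosDef.log_det_add_log_det_le {P Q : Matrix ι ι ℝ} (hP : P.PosDef) (hQ : Q.PosDef) :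
    Real.log P.det + Real.log Q.det ≤ (P * Q).trace - Fintype.card ι := by
  set S := CFC.sqrt P
  have hSS : S * S = P := CFC.sqrt_mul_sqrt_self P hP.posSemidef.nonneg
  have hS : S.IsHermitian := (CFC.sqrt_nonneg P).posSemidef.1
  have hSu : IsUnit S := (CFC.isUnit_sqrt_iff P hP.posSemidef.nonneg).2 hP.isUnit
  have hSQS : (S * Q * S).PosDef := by
    have := (IsUnit.posDef_star_left_conjugate_iff hSu).2 hQ
    rwa [star_eq_conjTranspose, hS.eq] at this
  have hdet : (S * Q * S).det = P.det * Q.det := by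
    rw [← hSS, det_mul, det_mul, det_mul]; ring
  have htr : (S * Q * S).trace = (P * Q).trace := by
    rw [trace_mul_cycle, hSS]
  rw [← Real.log_mul hP.det_pos.ne' hQ.det_pos.ne', ← hdet, ← htr]
  exact hSQS.log_det_le_trace_sub_card

theorem PosDef.log_det_add_log_det_le_of_add_eq {P Q : Matrix ι ι ℝ} (hP : P.PosDef)
    (hQ : Q.PosDef) (hPQ : P + Q = (2 : ℝ) • 1) :
    Real.log P.det + Real.log Q.det ≤ -((P - Q) * (P - Q)).trace / 4 := by
  have hQ' : Q = (2 : ℝ) • 1 - P := eq_sub_of_add_eq' hPQ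
  have key : (P - Q) * (P - Q) = (4 : ℝ) • 1 - (4 : ℝ) • (P * Q) := by
    subst hQ'
    simp only [mul_sub, sub_mul, smul_mul_assoc, mul_smul_comm, one_mul, mul_one, smul_sub,
      smul_smul]
    module
  have := hP.log_det_add_log_det_le hQ
  rw [key, trace_sub, trace_smul, trace_smul, trace_one]
  simp only [smul_eq_mul]
  linarith

theorem PosSemidef.trace_mul_nonneg {S T : Matrix ι ι ℝ} (hS : S.PosSemidef)
    (hT : T.PosSemidef) :
    0 ≤ (S * T).trace := by
  set R := CFC.sqrt S
  have hR : R.IsHermitian := (CFC.sqrt_nonneg S).posSemidef.1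
  have hRR : R * R = S := CFC.sqrt_mul_sqrt_self S hS.nonneg
  have : (S * T).trace = (R * T * Rᴴ).trace := by
    rw [hR.eq, ← hRR, mul_assoc, trace_mul_comm, mul_assoc]
  rw [this]
  exact (hT.mul_mul_conjTranspose_same R).trace_nonneg

theorem PosSemidef.trace_mul_le {S T : Matrix ι ι ℝ} {K : ℝ} (hS : S.PosSemidef)
    (hT : T ≤ K • 1) :
    (S * T).trace ≤ K * S.trace := by
  have := hS.trace_mul_nonneg (le_iff.1 hT)
  rwa [mul_sub, trace_sub, mul_smul_comm, mul_one, trace_smul, smul_eq_mul, sub_nonneg] at this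

theorem trace_conj_mul_conj_le {W D : Matrix ι ι ℝ} {K : ℝ} (hK : 0 ≤ K) (hW : W.IsHermitian)
    (hWK : W * W ≤ K • 1) (hD : D.IsHermitian) :
    ((W * D * W) * (W * D * W)).trace ≤ K ^ 2 * (D * D).trace := by
  have hZ : (W * W).PosSemidef := by
    have := posSemidef_self_mul_conjTranspose W
    rwa [hW.eq] at this
  have hDZD : (D * (W * W) * D).PosSemidef := by
    have := hZ.conjTranspose_mul_mul_same D
    rwa [hD.eq] at this
  have hDD : (D * D).PosSemidef := by
    have := posSemidef_conjTranspose_mul_self D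
    rwa [hD.eq] at this
  calc ((W * D * W) * (W * D * W)).trace = (D * (W * W) * D * (W * W)).trace := by
        simp only [mul_assoc]
        rw [trace_mul_comm W]
        simp only [mul_assoc]
    _ ≤ K * (D * (W * W) * D).trace := hDZD.trace_mul_le hWK
    _ = K * (D * D * (W * W)).trace := by rw [trace_mul_cycle]
    _ ≤ K * (K * (D * D).trace) := by gcongr; exact hDD.trace_mul_le hWK
    _ = K ^ 2 * (D * D).trace := by ring

theorem PosDef.exists_posDef_mul_mul_eq {W M : Matrix ι ι ℝ} (hW : W.IsHermitian) (hWu : IsUnit W)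
    (hM : M.PosDef) : ∃ P : Matrix ι ι ℝ, P.PosDef ∧ W * P * W = M := by
  have hdet := (isUnit_iff_isUnit_det W).1 hWu
  refine ⟨W⁻¹ * M * W⁻¹, ?_, ?_⟩
  · have := (IsUnit.posDef_star_left_conjugate_iff ((isUnit_nonsing_inv_iff).2 hWu)).2 hM
    rwa [star_eq_conjTranspose, hW.inv.eq] at this
  · simp only [← mul_assoc, mul_nonsing_inv W hdet, one_mul]
    rw [mul_assoc, nonsing_inv_mul W hdet, mul_one]

theorem log_det_mul_mul {W M : Matrix ι ι ℝ} (hWu : IsUnit W) (hM : M.PosDef) :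
    Real.log (W * M * W).det = Real.log (W * W).det + Real.log M.det := by
  have hWdet : W.det * W.det ≠ 0 := by
    simpa using ((isUnit_iff_isUnit_det W).1 hWu).ne_zero
  rw [det_mul, det_mul, det_mul, mul_right_comm, Real.log_mul hWdet hM.det_pos.ne']

theorem PosDef.log_det_midpoint {X Y Z : Matrix ι ι ℝ} {K : ℝ} (hX : X.PosDef) (hY : Y.PosDef)
    (hXY : X + Y = (2 : ℝ) • Z) (hK : 0 ≤ K) (hZK : Z ≤ K • 1) :
    (Real.log X.det + Real.log Y.det) / 2 + ((X - Y) * (X - Y)).trace / (8 * K ^ 2)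
      ≤ Real.log Z.det := by
  have hZ : Z.PosDef := by
    have : Z = (1 / 2 : ℝ) • (X + Y) := by rw [hXY, smul_smul]; norm_num
    exact this ▸ (hX.add hY).smul (by norm_num)
  set W := CFC.sqrt Z
  have hWW : W * W = Z := CFC.sqrt_mul_sqrt_self Z hZ.posSemidef.nonneg
  have hW : W.IsHermitian := (CFC.sqrt_nonneg Z).posSemidef.1
  have hWu : IsUnit W := (CFC.isUnit_sqrt_iff Z hZ.posSemidef.nonneg).2 hZ.isUnit
  obtain ⟨P, hP, rfl⟩ := hX.exists_posDef_mul_mul_eq hW hWu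
  obtain ⟨Q, hQ, rfl⟩ := hY.exists_posDef_mul_mul_eq hW hWu
  have hPQ : P + Q = (2 : ℝ) • 1 := by
    refine hWu.mul_left_cancel (hWu.mul_right_cancel ?_)
    rw [mul_add, add_mul, hXY, ← hWW, mul_smul_comm, smul_mul_assoc, mul_one]
  have htr : ((W * P * W - W * Q * W) * (W * P * W - W * Q * W)).trace
      ≤ K ^ 2 * ((P - Q) * (P - Q)).trace := by
    rw [← sub_mul, ← mul_sub]
    exact trace_conj_mul_conj_le hK hW (hWW ▸ hZK) (hP.1.sub hQ.1)
  have hD : 0 ≤ ((P - Q) * (P - Q)).trace := by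
    have := posSemidef_conjTranspose_mul_self (P - Q)
    rw [(hP.1.sub hQ.1).eq] at this
    exact this.trace_nonneg
  have hdiv : ((W * P * W - W * Q * W) * (W * P * W - W * Q * W)).trace / (8 * K ^ 2)
      ≤ ((P - Q) * (P - Q)).trace / 8 :=
    div_le_of_le_mul₀ (by positivity) (by positivity) (by linarith)
  have hPQ_le := hP.log_det_add_log_det_le_of_add_eq hQ hPQ
  rw [log_det_mul_mul hWu hP, log_det_mul_mul hWu hQ, ← hWW]
  linarith

theorem PosDef.le_log_det_smul_add_smul {A B : Matrix ι ι ℝ} {K : ℝ} (hA : A.PosDef)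
    (hB : B.PosDef) (hK : 0 ≤ K) (hAK : A ≤ K • 1) (hBK : B ≤ K • 1) {t : ℝ}
    (ht : t ∈ Icc (0 : ℝ) 1) :
    t * Real.log A.det + (1 - t) * Real.log B.det
      + t * (1 - t) / (2 * K ^ 2) * ((A - B) * (A - B)).trace
      ≤ Real.log (t • A + (1 - t) • B).det := by
  set f : ℝ → ℝ := fun s => Real.log (s • A + (1 - s) • B).det
  set e := ((A - B) * (A - B)).trace / (2 * K ^ 2)
  have hmid : ∀ x ∈ Icc (0 : ℝ) 1, ∀ y ∈ Icc (0 : ℝ) 1,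
      (f x + f y) / 2 + e * (x - y) ^ 2 / 4 ≤ f ((x + y) / 2) := by
    intro x hx y hy
    have hm : (x + y) / 2 ∈ Icc (0 : ℝ) 1 := ⟨by linarith [hx.1, hy.1], by linarith [hx.2, hy.2]⟩
    have hZK : ((x + y) / 2) • A + (1 - (x + y) / 2) • B ≤ K • 1 :=
      convex_Iic (K • (1 : Matrix ι ι ℝ)) hAK hBK hm.1 (by linarith [hm.2]) (by ring)
    have h := log_det_midpoint (hA.smul_add_one_sub_smul hB hx) (hA.smul_add_one_sub_smul hB hy)
      (by module) hK hZK
    have hXY : x • A + (1 - x) • B - (y • A + (1 - y) • B) = (x - y) • (A - B) := by module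
    rw [hXY, smul_mul_smul_comm, trace_smul, smul_eq_mul] at h
    convert h using 2
    simp only [e]; ring
  have hψ := nonneg_of_midpoint_concave
    (g := fun s => f s + e * s ^ 2 - (s * (f 1 + e) + (1 - s) * f 0)) ?_ ?_ ?_ ?_ ht
  · have hf1 : f 1 = Real.log A.det := by simp [f]
    have hf0 : f 0 = Real.log B.det := by simp [f]
    have he : t * (1 - t) / (2 * K ^ 2) * ((A - B) * (A - B)).trace = e * t - e * t ^ 2 := by
      simp only [e]; ring
    simp only [hf1, hf0] at hψ
    rw [he]
    linarith
  · have hf : ContinuousOn f (Icc 0 1) :=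
      ContinuousOn.log (by fun_prop) fun s hs => (hA.smul_add_one_sub_smul hB hs).det_pos.ne'
    fun_prop
  · intro x hx y hy
    nlinarith [hmid x hx y hy]
  · simp
  · simp

end Matrix

/-- Courtade et al., Lemma 15: lower bound for `log det` of a convex
combination of positive definite real symmetric matrices. -/
theorem stmt_4 {n : ℕ} (A B : Matrix (Fin n) (Fin n) ℝ)
    (hA : A.PosDef) (hB : B.PosDef) (t : ℝ) (ht : t ∈ Set.Icc (0:ℝ) 1) :
    Real.log (t • A + (1 - t) • B).det
      ≥ t * Real.log A.det + (1 - t) * Real.log B.det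
        + t * (1 - t) / (2 * max ((⨆ i, hA.1.eigenvalues i)^2) ((⨆ i, hB.1.eigenvalues i)^2))
          * Matrix.trace ((A - B)ᵀ * (A - B)) := by
  set KA := ⨆ i, hA.1.eigenvalues i
  set KB := ⨆ i, hB.1.eigenvalues i
  have hKA : 0 ≤ KA := Real.iSup_nonneg fun i => (hA.eigenvalues_pos i).le
  have hKB : 0 ≤ KB := Real.iSup_nonneg fun i => (hB.eigenvalues_pos i).le
  have hAK : A ≤ max KA KB • 1 := hA.1.le_smul_one_of_eigenvalues_le fun i =>
    (le_ciSup (Finite.bddAbove_range _) i).trans (le_max_left _ _)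
  have hBK : B ≤ max KA KB • 1 := hB.1.le_smul_one_of_eigenvalues_le fun i =>
    (le_ciSup (Finite.bddAbove_range _) i).trans (le_max_right _ _)
  rw [ge_iff_le, (pow_left_monotoneOn.map_max hKA hKB).symm,
    ← conjTranspose_eq_transpose_of_trivial, (hA.1.sub hB.1).eq]
  exact hA.le_log_det_smul_add_smul hB (le_max_of_le_left hKA) hAK hBK ht
end

section
/- For positive definite n×n real symmetric matrices A and B and any t ∈ [0,1]: log det(tA + (1-t)B) ≤ t·log det(A) + (1-t)·log det(B) + [t(1-t)/(2·min{λmin(A)², λmin(B)²})]·‖A-B‖_F², where λmin denotes the smallest eigenvalue. -/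
/-!
Put `D = A - B` and `M s = B + s • D`. Then `g s = log det (M s)` has derivative
`tr (M s⁻¹ D)`, and `M v⁻¹ - M u⁻¹ = (u - v) • M v⁻¹ D M u⁻¹`. With `m` the smaller of the two
least eigenvalues, `m • 1 ≤ M s` in the Loewner order, so `M s⁻¹ ≤ m⁻¹ • 1` and
`tr (M v⁻¹ D M u⁻¹ D) ≤ tr (D D) / m²`. Hence `g' + K • id` is monotone for `K = tr (D D) / m²`,
i.e. `g + K s² / 2` is convex on `[0, 1]`, and comparing it with its chord gives the bound.
-/

open Matrix Set
open scoped MatrixOrder ComplexOrder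

theorem convexOn_of_hasDerivAt_of_monotoneOn {D : Set ℝ} (hD : Convex ℝ D) {f f' : ℝ → ℝ}
    (hf : ∀ x ∈ D, HasDerivAt f (f' x) x) (hf' : MonotoneOn f' D) : ConvexOn ℝ D f := by
  refine MonotoneOn.convexOn_of_deriv hD
    (fun x hx => (hf x hx).continuousAt.continuousWithinAt)
    (fun x hx => (hf x (interior_subset hx)).differentiableAt.differentiableWithinAt) ?_
  exact (hf'.mono interior_subset).congr fun x hx => ((hf x (interior_subset hx)).deriv).symm

theorem apply_le_chord_add_of_monotoneOn_deriv_add_mul {f f' : ℝ → ℝ} {K t : ℝ}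
    (hf : ∀ x ∈ Icc (0 : ℝ) 1, HasDerivAt f (f' x) x)
    (hf' : MonotoneOn (fun x => f' x + K * x) (Icc 0 1)) (ht : t ∈ Icc (0 : ℝ) 1) :
    f t ≤ t * f 1 + (1 - t) * f 0 + t * (1 - t) / 2 * K := by
  have hconv : ConvexOn ℝ (Icc 0 1) fun x => f x + K / 2 * x ^ 2 := by
    refine convexOn_of_hasDerivAt_of_monotoneOn (convex_Icc 0 1) (fun x hx => ?_) hf'
    refine ((hf x hx).add ((hasDerivAt_pow 2 x).const_mul (K / 2))).congr_deriv ?_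
    push_cast
    ring
  have := hconv.2 (right_mem_Icc.2 zero_le_one) (left_mem_Icc.2 zero_le_one) ht.1
    (sub_nonneg.2 ht.2) (add_sub_cancel t 1)
  simp only [smul_eq_mul, mul_one, mul_zero, add_zero] at this
  nlinarith

namespace Matrix

variable {ι 𝕜 : Type*} [DecidableEq ι]

theorem posDef_of_smul_one_le {M : Matrix ι ι ℝ} {m : ℝ} (hm : 0 < m) (h : m • 1 ≤ M) :
    M.PosDef := by
  simpa using PosDef.posSemidef_add h (PosDef.one.smul hm)

variable [Fintype ι]

section RCLike

variable [RCLike 𝕜]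

theorem PosSemidef.trace_mul_nonneg_s5 {P Q : Matrix ι ι 𝕜} (hP : P.PosSemidef)
    (hQ : Q.PosSemidef) : 0 ≤ (P * Q).trace := by
  set S := CFC.sqrt P
  have hS : Sᴴ = S := (CFC.sqrt_nonneg P).posSemidef.isHermitian.eq
  have hP' : P = S * S := (CFC.sqrt_mul_sqrt_self P hP.nonneg).symm
  rw [hP', mul_assoc, trace_mul_comm, mul_assoc, ← mul_assoc]
  nth_rw 1 [← hS]
  exact (hQ.conjTranspose_mul_mul_same S).trace_nonneg

theorem trace_mul_le_trace_mul_of_le {X Y Q : Matrix ι ι 𝕜} (h : X ≤ Y) (hQ : Q.PosSemidef) :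
    (X * Q).trace ≤ (Y * Q).trace := by
  have := PosSemidef.trace_mul_nonneg_s5 h hQ
  rwa [sub_mul, trace_sub, sub_nonneg] at this

theorem IsHermitian.smul_one_le_of_forall_le_eigenvalues {A : Matrix ι ι 𝕜} (hA : A.IsHermitian)
    {c : ℝ} (hc : ∀ i, c ≤ hA.eigenvalues i) : c • (1 : Matrix ι ι 𝕜) ≤ A := by
  rw [← Algebra.algebraMap_eq_smul_one]
  refine algebraMap_le_of_le_spectrum (fun x hx => ?_) hA
  rw [hA.spectrum_real_eq_range_eigenvalues] at hx
  obtain ⟨i, rfl⟩ := hx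
  exact hc i

theorem PosDef.iInf_eigenvalues_pos [Nonempty ι] {A : Matrix ι ι 𝕜} (hA : A.PosDef) :
    0 < ⨅ i, hA.1.eigenvalues i := by
  obtain ⟨i, hi⟩ := exists_eq_ciInf_of_finite (f := hA.1.eigenvalues)
  exact hi ▸ hA.eigenvalues_pos i

theorem PosDef.inv_le_inv_smul_one {M : Matrix ι ι 𝕜} (hM : M.PosDef) {m : ℝ} (hm : 0 < m)
    (h : m • 1 ≤ M) : M⁻¹ ≤ m⁻¹ • (1 : Matrix ι ι 𝕜) := by
  rw [← Algebra.algebraMap_eq_smul_one] at h ⊢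
  have hspec := (algebraMap_le_iff_le_spectrum hM.isHermitian).mp h
  refine le_algebraMap_of_spectrum_le (fun x hx => ?_) hM.inv.isHermitian
  rw [← hM.isUnit.unit_spec, ← coe_units_inv, ← spectrum.map_inv] at hx
  have hx' := hspec _ hx
  exact (le_inv_comm₀ hm (inv_pos.mp (hm.trans_le hx'))).mp hx'

end RCLike

section Calculus

variable [NontriviallyNormedField 𝕜]

open Polynomial in
theorem hasDerivAt_det_one_add_smul (N : Matrix ι ι 𝕜) :
    HasDerivAt (fun s : 𝕜 => (1 + s • N).det) N.trace 0 := by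
  have hpoly : (fun s : 𝕜 => (1 + s • N).det)
      = fun s => (det (1 + (X : 𝕜[X]) • N.map C)).eval s := by
    ext s
    rw [eval_det]
    congr 1
    ext i j
    simp [Matrix.one_apply, mul_comm]
  rw [hpoly, ← derivative_det_one_add_X_smul]
  exact Polynomial.hasDerivAt _ 0

theorem hasDerivAt_det_add_smul (B D : Matrix ι ι 𝕜) {s₀ : 𝕜} (h : IsUnit (B + s₀ • D).det) :
    HasDerivAt (fun s => (B + s • D).det)
      ((B + s₀ • D).det * ((B + s₀ • D)⁻¹ * D).trace) s₀ := by
  set M := B + s₀ • D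
  have hfactor : ∀ s : 𝕜, B + s • D = M * (1 + (s - s₀) • (M⁻¹ * D)) := by
    intro s
    rw [mul_add, mul_one, Matrix.mul_smul, ← mul_assoc, mul_nonsing_inv _ h, one_mul]
    module
  simp only [hfactor, det_mul]
  have h0 : HasDerivAt (fun s => (1 + s • (M⁻¹ * D)).det) (M⁻¹ * D).trace (s₀ - s₀) := by
    simpa using hasDerivAt_det_one_add_smul (M⁻¹ * D)
  exact (h0.comp_sub_const s₀ s₀).const_mul _

end Calculus

theorem hasDerivAt_log_det_add_smul (B D : Matrix ι ι ℝ) {s₀ : ℝ} (h : (B + s₀ • D).det ≠ 0) :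
    HasDerivAt (fun s => Real.log (B + s • D).det) ((B + s₀ • D)⁻¹ * D).trace s₀ := by
  convert (hasDerivAt_det_add_smul B D (isUnit_iff_ne_zero.2 h)).log h using 1
  field_simp

theorem trace_inv_mul_inv_mul_le {M N D : Matrix ι ι ℝ} {m : ℝ} (hm : 0 < m) (hM : m • 1 ≤ M)
    (hN : m • 1 ≤ N) (hD : D.IsHermitian) :
    (M⁻¹ * D * N⁻¹ * D).trace ≤ (D * D).trace / m ^ 2 := by
  have hDND : (D * N⁻¹ * D).PosSemidef := by
    have := (posDef_of_smul_one_le hm hN).inv.posSemidef.conjTranspose_mul_mul_same D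
    rwa [hD.eq] at this
  have hDD : (D * D).PosSemidef := by
    have := posSemidef_conjTranspose_mul_self D
    rwa [hD.eq] at this
  calc (M⁻¹ * D * N⁻¹ * D).trace = (M⁻¹ * (D * N⁻¹ * D)).trace := by simp only [mul_assoc]
    _ ≤ (m⁻¹ • 1 * (D * N⁻¹ * D)).trace :=
      trace_mul_le_trace_mul_of_le ((posDef_of_smul_one_le hm hM).inv_le_inv_smul_one hm hM) hDND
    _ = m⁻¹ * (N⁻¹ * (D * D)).trace := by
      rw [smul_mul, one_mul, trace_smul, smul_eq_mul, mul_assoc, trace_mul_comm, mul_assoc]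
    _ ≤ m⁻¹ * (m⁻¹ • 1 * (D * D)).trace := by
      gcongr
      exact trace_mul_le_trace_mul_of_le
        ((posDef_of_smul_one_le hm hN).inv_le_inv_smul_one hm hN) hDD
    _ = (D * D).trace / m ^ 2 := by
      rw [smul_mul, one_mul, trace_smul, smul_eq_mul]
      field_simp

theorem log_det_smul_add_smul_le {A B : Matrix ι ι ℝ} {m : ℝ} (hm : 0 < m) (hA : m • 1 ≤ A)
    (hB : m • 1 ≤ B) {t : ℝ} (ht : t ∈ Icc (0 : ℝ) 1) :
    Real.log (t • A + (1 - t) • B).det ≤ t * Real.log A.det + (1 - t) * Real.log B.det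
      + t * (1 - t) / (2 * m ^ 2) * ((A - B) * (A - B)).trace := by
  set D := A - B
  have hMs : ∀ s ∈ Icc (0 : ℝ) 1, m • 1 ≤ B + s • D := by
    intro s hs
    have : B + s • D - m • 1 = s • (A - m • 1) + (1 - s) • (B - m • 1) := by module
    rw [le_iff, this]
    exact (PosSemidef.smul hA hs.1).add (PosSemidef.smul hB (sub_nonneg.2 hs.2))
  have hpd : ∀ s ∈ Icc (0 : ℝ) 1, (B + s • D).PosDef := fun s hs =>
    posDef_of_smul_one_le hm (hMs s hs)
  have hD : D.IsHermitian :=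
    (posDef_of_smul_one_le hm hA).isHermitian.sub (posDef_of_smul_one_le hm hB).isHermitian
  have hmono : MonotoneOn (fun s => ((B + s • D)⁻¹ * D).trace + (D * D).trace / m ^ 2 * s)
      (Icc 0 1) := by
    intro u hu v hv huv
    have hdiff : ((B + v • D)⁻¹ * D).trace - ((B + u • D)⁻¹ * D).trace
        = (u - v) * ((B + v • D)⁻¹ * D * (B + u • D)⁻¹ * D).trace := by
      rw [← trace_sub, ← sub_mul, inv_sub_inv (iff_of_true (hpd v hv).isUnit (hpd u hu).isUnit),
        show B + u • D - (B + v • D) = (u - v) • D by module, Matrix.mul_smul, Matrix.smul_mul,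
        Matrix.smul_mul, trace_smul, smul_eq_mul]
    have := trace_inv_mul_inv_mul_le hm (hMs v hv) (hMs u hu) hD
    dsimp only
    nlinarith
  have key := apply_le_chord_add_of_monotoneOn_deriv_add_mul
    (fun s hs => hasDerivAt_log_det_add_smul B D (hpd s hs).det_pos.ne') hmono ht
  rw [show B + (1 : ℝ) • D = A by module, show B + (0 : ℝ) • D = B by module,
    show B + t • D = t • A + (1 - t) • B by module] at key
  convert key using 2
  field_simp

end Matrix

/-- upper bound for `log det` of a convex
combination of positive definite real symmetric matrices. -/
theorem stmt_5 {n : ℕ} (A B : Matrix (Fin n) (Fin n) ℝ)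
    (hA : A.PosDef) (hB : B.PosDef) (t : ℝ) (ht : t ∈ Set.Icc (0:ℝ) 1) :
    Real.log (t • A + (1 - t) • B).det
      ≤ t * Real.log A.det + (1 - t) * Real.log B.det
        + t * (1 - t) / (2 * min ((⨅ i, hA.1.eigenvalues i)^2) ((⨅ i, hB.1.eigenvalues i)^2))
          * Matrix.trace ((A - B)ᵀ * (A - B)) := by
  rcases isEmpty_or_nonempty (Fin n) with hn | hn
  · simp [Matrix.trace]
  set mA := ⨅ i, hA.1.eigenvalues i
  set mB := ⨅ i, hB.1.eigenvalues i
  have hmA : 0 < mA := hA.iInf_eigenvalues_pos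
  have hmB : 0 < mB := hB.iInf_eigenvalues_pos
  have hmin : min (mA ^ 2) (mB ^ 2) = min mA mB ^ 2 := by
    rcases le_total mA mB with h | h
    · rw [min_eq_left h, min_eq_left (pow_le_pow_left₀ hmA.le h 2)]
    · rw [min_eq_right h, min_eq_right (pow_le_pow_left₀ hmB.le h 2)]
  have hsymm : (A - B)ᵀ = A - B := (hA.isHermitian.sub hB.isHermitian).eq
  rw [hmin, hsymm]
  exact log_det_smul_add_smul_le (lt_min hmA hmB)
    (hA.1.smul_one_le_of_forall_le_eigenvalues fun i =>
      (min_le_left _ _).trans (ciInf_le (Finite.bddBelow_range _) i))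
    (hB.1.smul_one_le_of_forall_le_eigenvalues fun i =>
      (min_le_right _ _).trans (ciInf_le (Finite.bddBelow_range _) i)) ht
end
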